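/- Let δ, d > 0 with δ ≤ d, and let (τ,ξ), (τ',ξ') ∈ ℝ × ℝ⁴ with ξ' ≠ 0, ξ + ξ' ≠ 0, τ ≤ 0 ≤ τ' and 0 ≤ τ + τ'. Assume | |τ| − |ξ| | ≤ δ, | |τ'| − |ξ'| | ≤ δ, and | |τ+τ'| − |ξ+ξ'| | ≤ d. Then the angle between the output spatial frequency and the spatial frequency of the positive-time factor is small: ∠(ξ+ξ', ξ')² ≤ 3π² · d / min(|ξ+ξ'|, |ξ'|). -/

import Mathlib

/-!
Write `a = ‖ξ + ξ'‖`, `b = ‖ξ'‖`, `c = ‖ξ‖`. Since `τ ≤ 0 ≤ τ + τ'`, we have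
`|τ + τ'| = |τ'| - |τ|`, so the three cone conditions give `a + c - b ≤ 2δ + d ≤ 3d`.
With `θ = ∠(ξ + ξ', ξ')`, the law of cosines in the triangle with sides `a, b, c` gives
`a b (1 - cos θ) = (c + b - a)(c + a - b) / 2 ≤ b (c + a - b)`,
hence `a (1 - cos θ) ≤ 3d`, and `1 - cos θ ≥ 2θ² / π²` on `[0, π]` finishes the proof.
-/

open Real InnerProductGeometry

theorem sq_le_mul_one_sub_cos {θ : ℝ} (hθ : |θ| ≤ π) : θ ^ 2 ≤ π ^ 2 / 2 * (1 - cos θ) := by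
  have hcos := cos_le_one_sub_mul_cos_sq hθ
  have hπ : 0 < π ^ 2 := by positivity
  calc θ ^ 2 = π ^ 2 / 2 * (2 / π ^ 2 * θ ^ 2) := by field_simp
    _ ≤ π ^ 2 / 2 * (1 - cos θ) := by gcongr; linarith

theorem angle_sq_le_mul_one_sub_cos_angle {V : Type*} [NormedAddCommGroup V]
    [InnerProductSpace ℝ V] (x y : V) :
    angle x y ^ 2 ≤ π ^ 2 / 2 * (1 - cos (angle x y)) :=
  sq_le_mul_one_sub_cos <| by
    rw [abs_of_nonneg (angle_nonneg x y)]; exact angle_le_pi x y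

theorem norm_mul_one_sub_cos_angle_le {V : Type*} [NormedAddCommGroup V]
    [InnerProductSpace ℝ V] (x : V) {y : V} (hy : y ≠ 0) :
    ‖x‖ * (1 - cos (angle x y)) ≤ ‖x - y‖ + ‖x‖ - ‖y‖ := by
  have hy_pos : 0 < ‖y‖ := norm_pos_iff.mpr hy
  have hcos := cos_angle_mul_norm_mul_norm x y
  have hlaw := norm_sub_sq_real x y
  have htri : ‖x - y‖ ≤ ‖x‖ + ‖y‖ := norm_sub_le x y
  have htri' : ‖y‖ - ‖x‖ ≤ ‖x - y‖ := by
    simpa only [norm_sub_rev] using norm_sub_norm_le y x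
  refine le_of_mul_le_mul_left ?_ hy_pos
  -- `‖x‖‖y‖ - ⟪x, y⟫ = (‖x - y‖ + ‖y‖ - ‖x‖)(‖x - y‖ + ‖x‖ - ‖y‖) / 2`
  nlinarith [mul_nonneg (sub_nonneg.mpr htri) (by linarith : 0 ≤ ‖x - y‖ + ‖x‖ - ‖y‖)]

theorem add_sub_le_of_near_cone {δ d τ τ' a b c : ℝ}
    (hτ : τ ≤ 0) (hτ' : 0 ≤ τ') (hττ' : 0 ≤ τ + τ')
    (hc : |(|τ| - c)| ≤ δ) (hb : |(|τ'| - b)| ≤ δ) (ha : |(|τ + τ'| - a)| ≤ d) :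
    a + c - b ≤ 2 * δ + d := by
  rw [abs_of_nonpos hτ] at hc
  rw [abs_of_nonneg hτ'] at hb
  rw [abs_of_nonneg hττ'] at ha
  linarith [(abs_le.mp hc).1, (abs_le.mp hb).2, (abs_le.mp ha).1]

theorem statement15_general (δ d : ℝ) (hδd : δ ≤ d)
    (τ τ' : ℝ) (ξ ξ' : EuclideanSpace ℝ (Fin 4))
    (hξ' : ξ' ≠ 0) (hsum : ξ + ξ' ≠ 0) (hτ : τ ≤ 0) (hτ' : 0 ≤ τ') (hττ' : 0 ≤ τ + τ')
    (hcone : |(|τ| - ‖ξ‖)| ≤ δ) (hcone' : |(|τ'| - ‖ξ'‖)| ≤ δ)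
    (hout : |(|τ + τ'| - ‖ξ + ξ'‖)| ≤ d) :
    (InnerProductGeometry.angle (ξ + ξ') ξ') ^ 2 ≤
      3 * Real.pi ^ 2 * d / min ‖ξ + ξ'‖ ‖ξ'‖ := by
  have hd : 0 ≤ d := (abs_nonneg _).trans hout
  have hexcess : ‖ξ + ξ'‖ + ‖ξ‖ - ‖ξ'‖ ≤ 3 * d := by
    linarith [add_sub_le_of_near_cone hτ hτ' hττ' hcone hcone' hout]
  have hdefect := norm_mul_one_sub_cos_angle_le (ξ + ξ') hξ'
  rw [add_sub_cancel_right] at hdefect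
  have hangle := angle_sq_le_mul_one_sub_cos_angle (ξ + ξ') ξ'
  have hmin_pos : 0 < min ‖ξ + ξ'‖ ‖ξ'‖ := lt_min (norm_pos_iff.mpr hsum) (norm_pos_iff.mpr hξ')
  rw [le_div_iff₀ hmin_pos]
  calc angle (ξ + ξ') ξ' ^ 2 * min ‖ξ + ξ'‖ ‖ξ'‖
      ≤ π ^ 2 / 2 * (1 - cos (angle (ξ + ξ') ξ')) * ‖ξ + ξ'‖ :=
        mul_le_mul hangle (min_le_left _ _) hmin_pos.le
          (mul_nonneg (by positivity) (sub_nonneg.mpr (cos_le_one _)))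
    _ = π ^ 2 / 2 * (‖ξ + ξ'‖ * (1 - cos (angle (ξ + ξ') ξ'))) := by ring
    _ ≤ π ^ 2 / 2 * (3 * d) := mul_le_mul_of_nonneg_left (by linarith) (by positivity)
    _ ≤ 3 * π ^ 2 * d := by nlinarith [sq_nonneg π]

/-- If `(τ,ξ)` and `(τ',ξ')`, with `τ ≤ 0 ≤ τ'` and `0 ≤ τ + τ'`, both lie
within `δ ≤ d` of the light cone in `ℝ × ℝ⁴`, and their sum lies within `d` of the light cone,
then the angle between the output spatial frequency and the spatial frequency of the
positive-time factor satisfies `∠(ξ+ξ', ξ')² ≤ 3π² d / min(|ξ+ξ'|, |ξ'|)`. -/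
theorem statement15 (δ d : ℝ) (hδ : 0 < δ) (hd : 0 < d) (hδd : δ ≤ d)
    (τ τ' : ℝ) (ξ ξ' : EuclideanSpace ℝ (Fin 4))
    (hξ' : ξ' ≠ 0) (hsum : ξ + ξ' ≠ 0) (hτ : τ ≤ 0) (hτ' : 0 ≤ τ') (hττ' : 0 ≤ τ + τ')
    (hcone : |(|τ| - ‖ξ‖)| ≤ δ) (hcone' : |(|τ'| - ‖ξ'‖)| ≤ δ)
    (hout : |(|τ + τ'| - ‖ξ + ξ'‖)| ≤ d) :
    (InnerProductGeometry.angle (ξ + ξ') ξ') ^ 2 ≤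
      3 * Real.pi ^ 2 * d / min ‖ξ + ξ'‖ ‖ξ'‖ :=
  statement15_general δ d hδd τ τ' ξ ξ' hξ' hsum hτ hτ' hττ' hcone hcone' hout
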